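/- Let I ⊆ ℝ be an open interval containing 0 and let θ : I → ℝ be a C² function with θ(0) = 0 and θ'(0) = 0. Then, as t → 0, (∫₀ᵗ cos(θ(s)) ds)² = t² − (θ''(0)²/20)·t⁶ + o(t⁶). -/

import Mathlib

open Set Filter Topology Asymptotics

/-!
Taylor's theorem gives `θ s = θ''(0) s² / 2 + o(s²)`, so
`cos (θ s) = 1 - θ s ^ 2 / 2 + O(θ s ^ 4) = 1 - θ''(0)² s⁴ / 8 + o(s⁴)`.
Integrating a little-o bound raises its exponent by one, hence
`∫₀ᵗ cos θ = t - θ''(0)² t⁵ / 40 + o(t⁵)`, and squaring this expansion gives the claim.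
-/

theorem taylor_isLittleO_two_of_isOpen {E : Type*} [NormedAddCommGroup E] [NormedSpace ℝ E]
    {f : ℝ → E} {s : Set ℝ} {x₀ : ℝ} (hs : IsOpen s) (hs' : Convex ℝ s) (hx₀ : x₀ ∈ s)
    (hf : ContDiffOn ℝ 2 f s) :
    (fun x => f x - (f x₀ + (x - x₀) • deriv f x₀ + ((x - x₀) ^ 2 / 2) • deriv (deriv f) x₀))
      =o[𝓝 x₀] fun x => (x - x₀) ^ 2 := by
  have hcoeff (n : ℕ) (hn : n ≤ 2) : iteratedDerivWithin n f s x₀ = iteratedDeriv n f x₀ :=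
    iteratedDerivWithin_eq_iteratedDeriv hs.uniqueDiffOn
      ((hf.of_le (by exact_mod_cast hn)).contDiffAt (hs.mem_nhds hx₀)) hx₀
  have htaylor := taylor_isLittleO hs' hx₀ hf
  rw [hs.nhdsWithin_eq hx₀] at htaylor
  convert htaylor using 3 with x
  simp only [taylorWithinEval_succ, taylor_within_zero_eval, hcoeff 1 (by norm_num),
    hcoeff 2 le_rfl, iteratedDeriv_succ, iteratedDeriv_zero, Nat.factorial]
  module

theorem eventually_forall_uIcc_of_eventually {α : Type*} [LinearOrder α] [TopologicalSpace α]
    [OrderTopology α] {p : α → Prop} {x₀ : α} (h : ∀ᶠ s in 𝓝 x₀, p s) :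
    ∀ᶠ t in 𝓝 x₀, ∀ s ∈ uIcc x₀ t, p s :=
  (tendsto_const_nhds.uIcc tendsto_id).eventually (eventually_smallSets_forall.2 h)

theorem Asymptotics.IsLittleO.intervalIntegral {E : Type*} [NormedAddCommGroup E]
    [NormedSpace ℝ E] {f : ℝ → E} {x₀ : ℝ} {n : ℕ} (h : f =o[𝓝 x₀] fun s => (s - x₀) ^ n) :
    (fun t => ∫ s in x₀..t, f s) =o[𝓝 x₀] fun t => (t - x₀) ^ (n + 1) := by
  refine isLittleO_iff.2 fun ε hε => ?_
  filter_upwards [eventually_forall_uIcc_of_eventually (isLittleO_iff.1 h hε)] with t ht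
  have hbound : ∀ s ∈ uIoc x₀ t, ‖f s‖ ≤ ε * |t - x₀| ^ n := fun s hs =>
    calc ‖f s‖ ≤ ε * |s - x₀| ^ n := by simpa using ht s (uIoc_subset_uIcc hs)
      _ ≤ ε * |t - x₀| ^ n := by
        gcongr ε * ?_ ^ n
        exact abs_sub_left_of_mem_uIcc (uIoc_subset_uIcc hs)
  calc ‖∫ s in x₀..t, f s‖ ≤ ε * |t - x₀| ^ n * |t - x₀| :=
        intervalIntegral.norm_integral_le_of_norm_le_const hbound
    _ = ε * ‖(t - x₀) ^ (n + 1)‖ := by rw [norm_pow, Real.norm_eq_abs, pow_succ, mul_assoc]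

theorem Asymptotics.IsLittleO.sq_sub_sq {α R : Type*} [NormedCommRing R] [NormMulClass R]
    {l : Filter α} {f g u v : α → R} (h : (fun x => f x - g x) =o[l] u) (hf : f =O[l] v)
    (hg : g =O[l] v) :
    (fun x => f x ^ 2 - g x ^ 2) =o[l] fun x => u x * v x :=
  (h.mul_isBigO (hf.add hg)).congr_left fun x => by ring

theorem Real.isBigO_cos_sub_one_add_sq_div_two :
    (fun x => Real.cos x - 1 + x ^ 2 / 2) =O[𝓝 0] fun x => x ^ 4 := by
  refine .of_bound (5 / 96) ?_
  filter_upwards [Metric.closedBall_mem_nhds (0 : ℝ) one_pos] with x hx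
  have hx1 : |x| ≤ 1 := by simpa using hx
  calc ‖Real.cos x - 1 + x ^ 2 / 2‖ = |Real.cos x - (1 - x ^ 2 / 2)| := by
        rw [Real.norm_eq_abs]; ring_nf
    _ ≤ |x| ^ 4 * (5 / 96) := Real.cos_bound hx1
    _ = 5 / 96 * ‖x ^ 4‖ := by rw [norm_pow, Real.norm_eq_abs]; ring

theorem isLittleO_sq_sub_of_isLittleO_sub_quintic {F : ℝ → ℝ} {k : ℝ}
    (h : (fun t => F t - (t - k * t ^ 5)) =o[𝓝 0] fun t => t ^ 5) :
    (fun t => F t ^ 2 - (t ^ 2 - 2 * k * t ^ 6)) =o[𝓝 0] fun t => t ^ 6 := by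
  have h51 : (fun t : ℝ => t ^ 5) =O[𝓝 0] fun t => t :=
    (isLittleO_pow_pow (m := 1) (n := 5) (by norm_num)).isBigO.congr_right (by simp)
  have hp : (fun t : ℝ => t - k * t ^ 5) =O[𝓝 0] fun t => t :=
    (isBigO_refl _ _).sub (h51.const_mul_left k)
  have hF : F =O[𝓝 0] fun t => t :=
    ((h.isBigO.trans h51).add hp).congr_left fun t => by ring
  have h10 : (fun t : ℝ => k ^ 2 * t ^ 10) =o[𝓝 0] fun t => t ^ 6 :=
    (isLittleO_pow_pow (by norm_num)).const_mul_left _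
  exact ((h.sq_sub_sq hF hp).congr_right (fun t => by ring)).add h10 |>.congr_left fun t => by ring

/-- If `θ` is `C²` on an open interval around `0` with `θ(0) = 0` and `θ'(0) = 0`,
then `(∫₀ᵗ cos(θ(s)) ds)² = t² - (θ''(0)²/20)·t⁶ + o(t⁶)` as `t → 0`. -/
theorem stmt_5 (a b : ℝ) (ha : a < 0) (hb : 0 < b) (θ : ℝ → ℝ)
    (hθ : ContDiffOn ℝ 2 θ (Ioo a b)) (h0 : θ 0 = 0) (h1 : deriv θ 0 = 0) :
    (fun t : ℝ => (∫ s in (0:ℝ)..t, Real.cos (θ s)) ^ 2 -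
        (t ^ 2 - (deriv (deriv θ) 0) ^ 2 / 20 * t ^ 6)) =o[𝓝 0] (fun t : ℝ => t ^ 6) := by
  set c := deriv (deriv θ) 0
  have hI : Ioo a b ∈ 𝓝 (0 : ℝ) := Ioo_mem_nhds ha hb
  have hθ2 : (fun s => θ s - c / 2 * s ^ 2) =o[𝓝 0] fun s => s ^ 2 := by
    simpa [h0, h1, c, div_mul_comm] using
      taylor_isLittleO_two_of_isOpen isOpen_Ioo (convex_Ioo a b) (mem_of_mem_nhds hI) hθ
  have hquad : (fun s : ℝ => c / 2 * s ^ 2) =O[𝓝 0] fun s => s ^ 2 :=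
    isBigO_const_mul_self _ _ _
  have hθO : θ =O[𝓝 0] fun s => s ^ 2 :=
    (hθ2.isBigO.add hquad).congr_left fun s => by ring
  have hθlim : Tendsto θ (𝓝 0) (𝓝 0) := by
    simpa only [h0] using (hθ.continuousOn.continuousAt hI).tendsto
  have hθ4 : (fun s => θ s ^ 4) =o[𝓝 0] fun s => s ^ 4 :=
    (hθO.pow 4).trans_isLittleO
      ((isLittleO_pow_pow (m := 4) (n := 8) (by norm_num)).congr_left fun s => by ring)
  -- `cos θ - (1 - c²s⁴/8) = (cos θ - 1 + θ²/2) - (θ² - (c s²/2)²)/2`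
  have hcos : (fun s => Real.cos (θ s) - (1 - c ^ 2 / 8 * s ^ 4)) =o[𝓝 0] fun s => s ^ 4 :=
    ((Real.isBigO_cos_sub_one_add_sq_div_two.comp_tendsto hθlim).trans_isLittleO hθ4).sub
      (((hθ2.sq_sub_sq hθO hquad).congr_right fun s => by ring).const_mul_left (1 / 2))
      |>.congr_left fun s => by simp only [Function.comp]; ring
  have hint : (fun t => (∫ s in (0:ℝ)..t, Real.cos (θ s)) - (t - c ^ 2 / 40 * t ^ 5))
      =o[𝓝 0] fun t => t ^ 5 := by
    refine (hcos.congr_right fun s => by rw [sub_zero]).intervalIntegral.congr' ?_ (by simp)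
    filter_upwards [eventually_forall_uIcc_of_eventually hI] with t ht
    have hcont : ContinuousOn (fun s => Real.cos (θ s)) (uIcc 0 t) :=
      Real.continuous_cos.comp_continuousOn (hθ.continuousOn.mono ht)
    rw [intervalIntegral.integral_sub hcont.intervalIntegrable
      (Continuous.intervalIntegrable (by fun_prop) _ _), intervalIntegral.integral_sub
      intervalIntegrable_const (Continuous.intervalIntegrable (by fun_prop) _ _)]
    simp only [intervalIntegral.integral_const, intervalIntegral.integral_const_mul,
      integral_pow, smul_eq_mul]
    ring
  convert isLittleO_sq_sub_of_isLittleO_sub_quintic hint using 4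
  ring
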